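/- arXiv:2509.03589 — 2 statements merged into one kernel-verified Lean document; each statement's English description precedes it below -/
import Mathlib

section
/- Under the factorization assumption, the commutation requirement in the definition of the constrained algebra is redundant: the set {P_S a P_S : a ∈ M and a U(s) = U(s) a for all s ∈ S} is equal to the set {P_S a P_S : a ∈ M}. -/
/-!
Replace `a ∈ M` by its average `b = ∫ U(s) a U(s)⁻¹ ds`, taken in the strong operator sense.
Writing `U(s) = u(s) v(s)`, the conjugate `U(s) a U(s)⁻¹ = u(s) a u(s)*` lies in `M`, so `b`
commutes with `M'` and hence lies in `M = M''`. Left invariance of the Haar measure makes `b`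
commute with every `U(t)`, and since `P U(s) = P = U(s) P`, also `P b P = P a P`.
-/

open MeasureTheory

section StrongIntegral

variable {X 𝕜 E F : Type*} [NormedAddCommGroup E] [NormedAddCommGroup F]

theorem Continuous.clm_apply_of_norm_le [TopologicalSpace X] [NontriviallyNormedField 𝕜]
    [NormedSpace 𝕜 E] [NormedSpace 𝕜 F] {T : X → E →L[𝕜] F} {C : ℝ}
    (hT : ∀ v, Continuous fun x => T x v) (hC : ∀ x, ‖T x‖ ≤ C) {g : X → E}
    (hg : Continuous g) : Continuous fun x => T x (g x) := by
  refine continuous_iff_continuousAt.mpr fun x₀ => tendsto_iff_norm_sub_tendsto_zero.mpr ?_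
  have hbound : ∀ x, ‖T x (g x) - T x₀ (g x₀)‖ ≤
      C * ‖g x - g x₀‖ + ‖T x (g x₀) - T x₀ (g x₀)‖ := fun x =>
    calc ‖T x (g x) - T x₀ (g x₀)‖ = ‖T x (g x - g x₀) + (T x (g x₀) - T x₀ (g x₀))‖ := by
          rw [map_sub]; abel_nf
      _ ≤ _ := (norm_add_le _ _).trans (by gcongr; exact (T x).le_of_opNorm_le (hC x) _)
  refine squeeze_zero (fun _ => norm_nonneg _) hbound ?_
  have h₁ := (((hg.tendsto x₀).sub_const (g x₀)).norm).const_mul C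
  have h₂ := (((hT (g x₀)).tendsto x₀).sub_const (T x₀ (g x₀))).norm
  simpa using h₁.add h₂

variable [RCLike 𝕜] [NormedSpace 𝕜 E] [MeasurableSpace X] (μ : Measure X)

theorem ContinuousLinearMap.exists_apply_eq_integral [NormedSpace 𝕜 F] [NormedSpace ℝ F]
    [SMulCommClass ℝ 𝕜 F] [IsFiniteMeasure μ] {T : X → E →L[𝕜] F} {C : ℝ} (hC : ∀ x, ‖T x‖ ≤ C)
    (hT : ∀ v, Integrable (fun x => T x v) μ) :
    ∃ b : E →L[𝕜] F, ∀ v, b v = ∫ x, T x v ∂μ := by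
  let L : E →ₗ[𝕜] F :=
    { toFun := fun v => ∫ x, T x v ∂μ
      map_add' := fun v w => by simp only [map_add]; exact integral_add (hT v) (hT w)
      map_smul' := fun c v => by simp only [map_smul]; exact integral_smul c _ }
  refine ⟨L.mkContinuous (μ.real Set.univ * C) fun v => ?_, fun v => rfl⟩
  calc ‖∫ x, T x v ∂μ‖ ≤ C * ‖v‖ * μ.real Set.univ :=
        norm_integral_le_of_norm_le_const (.of_forall fun x => (T x).le_of_opNorm_le (hC x) v)
    _ = _ := by ring

theorem ContinuousLinearMap.commute_of_apply_eq_integral [NormedSpace ℝ E] [CompleteSpace E]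
    {T : X → E →L[𝕜] E} {b c : E →L[𝕜] E}
    (hb : ∀ v, b v = ∫ x, T x v ∂μ) (hT : ∀ v, Integrable (fun x => T x v) μ)
    (hc : ∀ x, Commute c (T x)) : Commute c b := by
  ext v
  calc c (b v) = ∫ x, c (T x v) ∂μ := by rw [hb, ← integral_comp_comm c (hT v)]
    _ = ∫ x, T x (c v) ∂μ :=
        integral_congr_ae (.of_forall fun x => DFunLike.congr_fun (hc x).eq v)
    _ = b (c v) := (hb _).symm

end StrongIntegral

theorem ContinuousLinearMap.norm_le_one_of_mem_unitary {H : Type*} [NormedAddCommGroup H]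
    [InnerProductSpace ℂ H] [CompleteSpace H] {u : H →L[ℂ] H} (hu : u ∈ unitary (H →L[ℂ] H)) :
    ‖u‖ ≤ 1 :=
  opNorm_le_bound _ zero_le_one fun ψ => by rw [norm_map_of_mem_unitary hu, one_mul]

namespace VonNeumannAlgebra

variable {H : Type*} [NormedAddCommGroup H] [InnerProductSpace ℂ H] [CompleteSpace H]
  (M : VonNeumannAlgebra H)

theorem mul_mul_star_mem_of_mem_commutant {a u v : H →L[ℂ] H} (ha : a ∈ M) (hu : u ∈ M)
    (hv : v ∈ M.commutant) (hv_unitary : v ∈ unitary (H →L[ℂ] H)) :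
    u * v * a * star (u * v) ∈ M := by
  have hva : v * a = a * v := (mem_commutant_iff.mp hv a ha).symm
  have hconj : u * v * a * star (u * v) = u * a * star u := by
    rw [star_mul, ← mul_assoc, mul_assoc u v a, hva, ← mul_assoc, mul_assoc (u * a) v,
      Unitary.mul_star_self_of_mem hv_unitary, mul_one]
  rw [hconj]
  exact mul_mem (mul_mem hu ha) (star_mem hu)

theorem mem_of_apply_eq_integral {X : Type*} [MeasurableSpace X] (μ : Measure X)
    {T : X → H →L[ℂ] H} {b : H →L[ℂ] H} (hb : ∀ ψ, b ψ = ∫ x, T x ψ ∂μ)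
    (hT : ∀ ψ, Integrable (fun x => T x ψ) μ) (hTM : ∀ x, T x ∈ M) : b ∈ M := by
  rw [← SetLike.mem_coe, ← M.centralizer_centralizer]
  exact fun c hc =>
    (ContinuousLinearMap.commute_of_apply_eq_integral μ hb hT fun x => (hc _ (hTM x)).symm).eq

end VonNeumannAlgebra

theorem MonoidHom.unitary_mul_conj {S A : Type*} [Group S] [Monoid A] [StarMul A]
    (ρ : S →* unitary A) (a : A) (s t : S) :
    (ρ t : A) * ((ρ s : A) * a * (ρ s⁻¹ : A)) =
      (ρ (t * s) : A) * a * (ρ (t * s)⁻¹ : A) * (ρ t : A) := by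
  rw [mul_assoc _ _ (ρ t : A), ← Submonoid.coe_mul, ← map_mul, mul_inv_rev, inv_mul_cancel_right,
    map_mul, Submonoid.coe_mul]
  simp only [mul_assoc]

section UnitaryRepresentation

variable {H : Type*} [NormedAddCommGroup H] [InnerProductSpace ℂ H] [CompleteSpace H]
  {S : Type*} [Group S] [TopologicalSpace S] [IsTopologicalGroup S]
  [MeasurableSpace S] [BorelSpace S] (μ : Measure S) {ρ : S →* unitary (H →L[ℂ] H)}

theorem integrable_conj_apply [CompactSpace S] [IsFiniteMeasure μ]
    (hρ : ∀ ψ, Continuous fun s => (ρ s : H →L[ℂ] H) ψ) (a : H →L[ℂ] H) (ψ : H) :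
    Integrable (fun s => ((ρ s : H →L[ℂ] H) * a * (ρ s⁻¹ : H →L[ℂ] H)) ψ) μ :=
  (Continuous.clm_apply_of_norm_le hρ
    (fun s => ContinuousLinearMap.norm_le_one_of_mem_unitary (ρ s).2)
    (a.continuous.comp ((hρ ψ).comp continuous_inv))).integrable_of_hasCompactSupport
    (.of_compactSpace _)

theorem exists_apply_eq_integral_conj [CompactSpace S] [IsFiniteMeasure μ]
    (hρ : ∀ ψ, Continuous fun s => (ρ s : H →L[ℂ] H) ψ) (a : H →L[ℂ] H) :
    ∃ b : H →L[ℂ] H, ∀ ψ, b ψ = ∫ s, ((ρ s : H →L[ℂ] H) * a * (ρ s⁻¹ : H →L[ℂ] H)) ψ ∂μ :=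
  ContinuousLinearMap.exists_apply_eq_integral μ (C := ‖a‖)
    (fun s => by rw [CStarRing.norm_mul_coe_unitary, CStarRing.norm_coe_unitary_mul])
    (integrable_conj_apply μ hρ a)

theorem commute_of_apply_eq_integral_conj [CompactSpace S] [IsFiniteMeasure μ]
    [μ.IsMulLeftInvariant] (hρ : ∀ ψ, Continuous fun s => (ρ s : H →L[ℂ] H) ψ)
    {a b : H →L[ℂ] H}
    (hb : ∀ ψ, b ψ = ∫ s, ((ρ s : H →L[ℂ] H) * a * (ρ s⁻¹ : H →L[ℂ] H)) ψ ∂μ) (t : S) :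
    Commute (ρ t : H →L[ℂ] H) b := by
  ext ψ
  calc (ρ t : H →L[ℂ] H) (b ψ)
      = ∫ s, ((ρ t : H →L[ℂ] H) * ((ρ s : H →L[ℂ] H) * a * (ρ s⁻¹ : H →L[ℂ] H))) ψ ∂μ := by
        rw [hb, ← ContinuousLinearMap.integral_comp_comm _ (integrable_conj_apply μ hρ a ψ)]; rfl
    _ = ∫ s, ((ρ (t * s) : H →L[ℂ] H) * a * (ρ (t * s)⁻¹ : H →L[ℂ] H))
          ((ρ t : H →L[ℂ] H) ψ) ∂μ := by
        simp only [ρ.unitary_mul_conj]; rfl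
    _ = b ((ρ t : H →L[ℂ] H) ψ) := by
        rw [integral_mul_left_eq_self
          (fun s => ((ρ s : H →L[ℂ] H) * a * (ρ s⁻¹ : H →L[ℂ] H)) ((ρ t : H →L[ℂ] H) ψ)), hb]

theorem mul_unitary_eq_self_of_apply_eq_integral [μ.IsMulRightInvariant] {P : H →L[ℂ] H}
    (hP : ∀ ψ, P ψ = ∫ s, (ρ s : H →L[ℂ] H) ψ ∂μ) (s : S) :
    P * (ρ s : H →L[ℂ] H) = P := by
  ext ψ
  calc P ((ρ s : H →L[ℂ] H) ψ) = ∫ t, (ρ (t * s) : H →L[ℂ] H) ψ ∂μ := by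
        simp only [hP, map_mul, Submonoid.coe_mul]; rfl
    _ = P ψ := by rw [integral_mul_right_eq_self (fun t => (ρ t : H →L[ℂ] H) ψ), hP]

theorem unitary_mul_eq_self_of_apply_eq_integral [CompactSpace S] [IsFiniteMeasure μ]
    [μ.IsMulLeftInvariant] (hρ : ∀ ψ, Continuous fun s => (ρ s : H →L[ℂ] H) ψ) {P : H →L[ℂ] H}
    (hP : ∀ ψ, P ψ = ∫ s, (ρ s : H →L[ℂ] H) ψ ∂μ) (s : S) :
    (ρ s : H →L[ℂ] H) * P = P := by
  ext ψ
  calc (ρ s : H →L[ℂ] H) (P ψ) = ∫ t, (ρ (s * t) : H →L[ℂ] H) ψ ∂μ := by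
        rw [hP, ← ContinuousLinearMap.integral_comp_comm _
          ((hρ ψ).integrable_of_hasCompactSupport (.of_compactSpace _))]
        simp only [map_mul, Submonoid.coe_mul]; rfl
    _ = P ψ := by rw [integral_mul_left_eq_self (fun t => (ρ t : H →L[ℂ] H) ψ), hP]

theorem mul_mul_eq_of_apply_eq_integral_conj [CompactSpace S] [IsProbabilityMeasure μ]
    [μ.IsMulLeftInvariant] [μ.IsMulRightInvariant]
    (hρ : ∀ ψ, Continuous fun s => (ρ s : H →L[ℂ] H) ψ) {P : H →L[ℂ] H}
    (hP : ∀ ψ, P ψ = ∫ s, (ρ s : H →L[ℂ] H) ψ ∂μ) {a b : H →L[ℂ] H}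
    (hb : ∀ ψ, b ψ = ∫ s, ((ρ s : H →L[ℂ] H) * a * (ρ s⁻¹ : H →L[ℂ] H)) ψ ∂μ) :
    P * b * P = P * a * P := by
  have hconj : ∀ s, P * ((ρ s : H →L[ℂ] H) * a * (ρ s⁻¹ : H →L[ℂ] H)) * P = P * a * P := by
    intro s
    calc _ = P * (ρ s : H →L[ℂ] H) * a * ((ρ s⁻¹ : H →L[ℂ] H) * P) := by simp only [mul_assoc]
      _ = P * a * P := by
        rw [mul_unitary_eq_self_of_apply_eq_integral μ hP,
          unitary_mul_eq_self_of_apply_eq_integral μ hρ hP]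
  ext ψ
  calc P (b (P ψ))
      = ∫ s, (P * ((ρ s : H →L[ℂ] H) * a * (ρ s⁻¹ : H →L[ℂ] H)) * P) ψ ∂μ := by
        rw [hb, ← ContinuousLinearMap.integral_comp_comm _ (integrable_conj_apply μ hρ a _)]; rfl
    _ = (P * a * P) ψ := by simp only [hconj, integral_const, probReal_univ, one_smul]

end UnitaryRepresentation

theorem constrained_algebra_no_commutation_needed_general
    {H : Type*} [NormedAddCommGroup H] [InnerProductSpace ℂ H] [CompleteSpace H]
    {S : Type*} [Group S] [TopologicalSpace S] [IsTopologicalGroup S]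
    [CompactSpace S] [MeasurableSpace S] [BorelSpace S]
    (μ : Measure S) [μ.IsHaarMeasure] [IsProbabilityMeasure μ]
    [μ.IsMulRightInvariant]
    (U : S → (H →L[ℂ] H))
    (hU_mul : ∀ s t : S, U (s * t) = U s * U t)
    (hU_unitary : ∀ s : S, U s ∈ unitary (H →L[ℂ] H))
    (hU_cont : ∀ ψ : H, Continuous fun s => U s ψ)
    (M : VonNeumannAlgebra H)
    (hfac : ∀ s : S, ∃ u v : H →L[ℂ] H, u ∈ M ∧ v ∈ M.commutant ∧
      u ∈ unitary (H →L[ℂ] H) ∧ v ∈ unitary (H →L[ℂ] H) ∧ U s = u * v)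
    (P : H →L[ℂ] H) (hP : ∀ ψ : H, P ψ = ∫ s, U s ψ ∂μ) :
    {x : H →L[ℂ] H | ∃ a ∈ M, (∀ s : S, a * U s = U s * a) ∧ x = P * a * P} =
      {x : H →L[ℂ] H | ∃ a ∈ M, x = P * a * P} := by
  let ρ : S →* unitary (H →L[ℂ] H) :=
    MonoidHom.mk' (fun s => ⟨U s, hU_unitary s⟩) fun s t => Subtype.ext (hU_mul s t)
  have hρ : ∀ ψ, Continuous fun s => (ρ s : H →L[ℂ] H) ψ := hU_cont
  refine Set.Subset.antisymm (fun _ ⟨a, ha, _, hx⟩ => ⟨a, ha, hx⟩) ?_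
  rintro _ ⟨a, ha, rfl⟩
  obtain ⟨b, hb⟩ := exists_apply_eq_integral_conj μ hρ a
  have hconj_mem : ∀ s, (ρ s : H →L[ℂ] H) * a * (ρ s⁻¹ : H →L[ℂ] H) ∈ M := fun s => by
    obtain ⟨u, v, hu, hv, -, hv_unitary, huv⟩ := hfac s
    rw [map_inv, ← Unitary.star_eq_inv, Unitary.coe_star]
    change U s * a * star (U s) ∈ M
    exact huv ▸ M.mul_mul_star_mem_of_mem_commutant ha hu hv hv_unitary
  exact ⟨b, M.mem_of_apply_eq_integral μ hb (integrable_conj_apply μ hρ a) hconj_mem,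
    fun s => (commute_of_apply_eq_integral_conj μ hρ hb s).eq.symm,
    (mul_mul_eq_of_apply_eq_integral_conj μ hρ hP hb).symm⟩

/-- Under the factorization assumption, the commutation requirement in
the definition of the constrained algebra is redundant:
`{P_S a P_S : a ∈ M, [a, U s] = 0 ∀ s}` equals `{P_S a P_S : a ∈ M}`. -/
theorem constrained_algebra_no_commutation_needed
    {H : Type*} [NormedAddCommGroup H] [InnerProductSpace ℂ H] [CompleteSpace H]
    {S : Type*} [Group S] [TopologicalSpace S] [IsTopologicalGroup S]
    [CompactSpace S] [T2Space S] [MeasurableSpace S] [BorelSpace S]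
    (μ : Measure S) [μ.IsHaarMeasure] [IsProbabilityMeasure μ]
    [μ.IsMulRightInvariant] [μ.IsInvInvariant]
    (U : S → (H →L[ℂ] H))
    (hU_mul : ∀ s t : S, U (s * t) = U s * U t)
    (hU_unitary : ∀ s : S, U s ∈ unitary (H →L[ℂ] H))
    (hU_cont : ∀ ψ : H, Continuous fun s => U s ψ)
    (M : VonNeumannAlgebra H)
    (hfac : ∀ s : S, ∃ u v : H →L[ℂ] H, u ∈ M ∧ v ∈ M.commutant ∧
      u ∈ unitary (H →L[ℂ] H) ∧ v ∈ unitary (H →L[ℂ] H) ∧ U s = u * v)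
    (P : H →L[ℂ] H) (hP : ∀ ψ : H, P ψ = ∫ s, U s ψ ∂μ) :
    {x : H →L[ℂ] H | ∃ a ∈ M, (∀ s : S, a * U s = U s * a) ∧ x = P * a * P} =
      {x : H →L[ℂ] H | ∃ a ∈ M, x = P * a * P} :=
  constrained_algebra_no_commutation_needed_general μ U hU_mul hU_unitary hU_cont M hfac P hP
end

section
/- Haag duality violation for an odd number of Majorana fermions: the matrix O := Z^{⊗(ℓ−1)} ⊗ Y (which equals χ_{2ℓ}) satisfies O χ_j = −χ_j O for every 1 ≤ j ≤ 2ℓ−1, F O F⁻¹ = −O, O is self-adjoint, O² = 1, and O is not a scalar multiple of the identity. In particular, the graded (super)commutant of the algebra A({1, …, 2ℓ−1}) generated by the 2ℓ−1 Majorana matrices contains a non-scalar homogeneous operator. -/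
noncomputable section

/-- The Pauli `X` matrix. -/
def PauliX : Matrix (Fin 2) (Fin 2) ℂ := !![0, 1; 1, 0]

/-- The Pauli `Y` matrix. -/
def PauliY : Matrix (Fin 2) (Fin 2) ℂ := !![0, -Complex.I; Complex.I, 0]

/-- The Pauli `Z` matrix. -/
def PauliZ : Matrix (Fin 2) (Fin 2) ℂ := !![1, 0; 0, -1]

/-- `Mat ℓ` is the algebra of `2^ℓ × 2^ℓ` complex matrices, realized as matrices indexed
by `Fin ℓ → Fin 2` (the `ℓ`-fold Kronecker product of `2 × 2` matrix algebras). -/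
abbrev Mat (ℓ : ℕ) := Matrix (Fin ℓ → Fin 2) (Fin ℓ → Fin 2) ℂ

/-- The `ℓ`-fold Kronecker product of an `ℓ`-tuple of `2 × 2` matrices. -/
def kron {ℓ : ℕ} (A : Fin ℓ → Matrix (Fin 2) (Fin 2) ℂ) : Mat ℓ :=
  Matrix.of fun i j => ∏ k, A k (i k) (j k)

/-- The Majorana matrices (1-based index `j` with `1 ≤ j ≤ 2ℓ`):
`χ_{2k−1} = Z^{⊗(k−1)} ⊗ X ⊗ 1^{⊗(ℓ−k)}` and `χ_{2k} = Z^{⊗(k−1)} ⊗ Y ⊗ 1^{⊗(ℓ−k)}`. -/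
def chi (ℓ : ℕ) (j : ℕ) : Mat ℓ :=
  kron fun m =>
    if 2 * (m : ℕ) + 2 < j then PauliZ
    else if 2 * (m : ℕ) + 1 = j then PauliX
    else if 2 * (m : ℕ) + 2 = j then PauliY
    else 1

/-- The fermion parity operator `F = Z^{⊗ℓ}`. -/
def fermionParity (ℓ : ℕ) : Mat ℓ := kron fun _ => PauliZ

/-- `A(R)`: the unital subalgebra of `Mat ℓ` generated by the Majorana matrices
`χ_j` with `j ∈ R`. -/
def majoranaAlgebra (ℓ : ℕ) (R : Set ℕ) : Subalgebra ℂ (Mat ℓ) :=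
  Algebra.adjoin ℂ {x : Mat ℓ | ∃ j ∈ R, x = chi ℓ j}

end

/- ## Auxiliary lemmas -/

lemma kron_mul {ℓ : ℕ} (A B : Fin ℓ → Matrix (Fin 2) (Fin 2) ℂ) :
    kron A * kron B = kron (fun k => A k * B k) := by
  ext i j
  simp only [kron, Matrix.mul_apply, Matrix.of_apply]
  rw [show (∑ x : Fin ℓ → Fin 2, (∏ k, A k (i k) (x k)) * ∏ k, B k (x k) (j k))
      = ∑ x : Fin ℓ → Fin 2, ∏ k, (A k (i k) (x k) * B k (x k) (j k)) from
    Finset.sum_congr rfl fun m _ => (Finset.prod_mul_distrib).symm,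
    ← Fintype.prod_sum (fun k t => A k (i k) t * B k t (j k))]

lemma kron_one {ℓ : ℕ} : kron (fun _ : Fin ℓ => (1 : Matrix (Fin 2) (Fin 2) ℂ)) = 1 := by
  ext i j
  simp only [kron, Matrix.of_apply, Matrix.one_apply]
  by_cases h : i = j
  · subst h; simp
  · rw [if_neg h]
    obtain ⟨k, hk⟩ : ∃ k, i k ≠ j k := by
      by_contra hc; push_neg at hc; exact h (funext hc)
    exact Finset.prod_eq_zero (Finset.mem_univ k) (by simp [Matrix.one_apply, hk])

lemma kron_smul {ℓ : ℕ} (s : Fin ℓ → ℂ) (A : Fin ℓ → Matrix (Fin 2) (Fin 2) ℂ) :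
    kron (fun k => s k • A k) = (∏ k, s k) • kron A := by
  ext i j
  simp [kron, Finset.prod_mul_distrib]

lemma kron_conjTranspose {ℓ : ℕ} (A : Fin ℓ → Matrix (Fin 2) (Fin 2) ℂ) :
    (kron A).conjTranspose = kron (fun k => (A k).conjTranspose) := by
  ext i j
  simp [kron, Matrix.conjTranspose_apply, map_prod]

lemma kron_anticomm {ℓ : ℕ} (A B : Fin ℓ → Matrix (Fin 2) (Fin 2) ℂ) (s : Fin ℓ → ℂ)
    (h : ∀ k, A k * B k = s k • (B k * A k)) (hs : ∏ k, s k = -1) :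
    kron A * kron B = -(kron B * kron A) := by
  rw [kron_mul, kron_mul]
  calc kron (fun k => A k * B k) = kron (fun k => s k • (B k * A k)) :=
        congrArg kron (funext fun k => h k)
    _ = (∏ k, s k) • kron (fun k => B k * A k) := kron_smul _ _
    _ = _ := by rw [hs]; simp

lemma ZX_anti : PauliZ * PauliX = (-1 : ℂ) • (PauliX * PauliZ) := by
  simp [PauliX, PauliZ, Matrix.mul_fin_two]
lemma ZY_anti : PauliZ * PauliY = (-1 : ℂ) • (PauliY * PauliZ) := by
  simp [PauliY, PauliZ, Matrix.mul_fin_two]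
lemma YX_anti : PauliY * PauliX = (-1 : ℂ) • (PauliX * PauliY) := by
  simp [PauliX, PauliY, Matrix.mul_fin_two]
lemma ZZ_one : PauliZ * PauliZ = 1 := by
  simp [PauliZ, Matrix.mul_fin_two]; ext i j
  fin_cases i <;> fin_cases j <;> simp [Matrix.one_apply]
lemma YY_one : PauliY * PauliY = 1 := by
  simp [PauliY, Matrix.mul_fin_two]; ext i j
  fin_cases i <;> fin_cases j <;> simp [Matrix.one_apply, Complex.I_mul_I]
lemma Zherm : PauliZ.conjTranspose = PauliZ := by
  ext i j; fin_cases i <;> fin_cases j <;> simp [PauliZ]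
lemma Yherm : PauliY.conjTranspose = PauliY := by
  ext i j; fin_cases i <;> fin_cases j <;> simp [PauliY]

lemma prod_sign {ℓ : ℕ} (p : Fin ℓ) :
    (∏ k : Fin ℓ, (if (k : ℕ) = (p : ℕ) then (-1 : ℂ) else 1)) = -1 := by
  calc (∏ k : Fin ℓ, (if (k : ℕ) = (p : ℕ) then (-1 : ℂ) else 1))
      = ∏ k : Fin ℓ, (if k = p then (-1 : ℂ) else 1) :=
        Finset.prod_congr rfl fun k _ => if_congr (by simp [Fin.ext_iff]) rfl rfl
    _ = -1 := by rw [Finset.prod_ite_eq' Finset.univ p (fun _ => (-1 : ℂ))]; simp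

lemma chi_top (ℓ : ℕ) (hℓ : 1 ≤ ℓ) :
    chi ℓ (2 * ℓ) = kron (fun m : Fin ℓ => if (m : ℕ) + 1 = ℓ then PauliY else PauliZ) := by
  unfold chi
  refine congrArg kron (funext fun m => ?_)
  have hm := m.isLt
  by_cases h : (m : ℕ) + 1 = ℓ
  · rw [if_pos h, if_neg (by omega), if_neg (by omega), if_pos (by omega)]
  · rw [if_pos (by omega), if_neg h]

/-- Haag duality violation for an odd number (`2ℓ − 1`) of Majorana
fermions: the matrix `O = Z^{⊗(ℓ−1)} ⊗ Y` equals `χ_{2ℓ}`, anticommutes with `χ_j` for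
every `1 ≤ j ≤ 2ℓ − 1`, is fermionic (`F O F⁻¹ = −O`), self-adjoint, squares to the
identity, and is not a scalar multiple of the identity.  In particular the graded
supercommutant of `A({1, …, 2ℓ−1})` contains a non-scalar homogeneous operator. -/
theorem majorana_odd_haag_violation (ℓ : ℕ) (hℓ : 1 ≤ ℓ) :
    (kron fun m : Fin ℓ => if (m : ℕ) + 1 = ℓ then PauliY else PauliZ) = chi ℓ (2 * ℓ) ∧
    (∀ j : ℕ, 1 ≤ j → j ≤ 2 * ℓ - 1 →
      chi ℓ (2 * ℓ) * chi ℓ j = -(chi ℓ j * chi ℓ (2 * ℓ))) ∧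
    fermionParity ℓ * chi ℓ (2 * ℓ) * (fermionParity ℓ)⁻¹ = -(chi ℓ (2 * ℓ)) ∧
    (chi ℓ (2 * ℓ)).conjTranspose = chi ℓ (2 * ℓ) ∧
    chi ℓ (2 * ℓ) * chi ℓ (2 * ℓ) = 1 ∧
    ¬∃ c : ℂ, chi ℓ (2 * ℓ) = c • (1 : Mat ℓ) := by
  have htop := chi_top ℓ hℓ
  -- O² = 1
  have hsq : chi ℓ (2 * ℓ) * chi ℓ (2 * ℓ) = 1 := by
    rw [htop, kron_mul]
    rw [show (fun k : Fin ℓ => (if (k : ℕ) + 1 = ℓ then PauliY else PauliZ) *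
          (if (k : ℕ) + 1 = ℓ then PauliY else PauliZ))
        = fun _ : Fin ℓ => (1 : Matrix (Fin 2) (Fin 2) ℂ) from
      funext fun k => by by_cases h : (k : ℕ) + 1 = ℓ <;> simp [h, YY_one, ZZ_one]]
    exact kron_one
  refine ⟨htop.symm, ?_, ?_, ?_, hsq, ?_⟩
  · -- anticommutation with χ_j, 1 ≤ j ≤ 2ℓ-1
    intro j hj1 hj2
    have hp : (j - 1) / 2 < ℓ := by omega
    unfold chi
    apply kron_anticomm _ _ (fun k : Fin ℓ => if (k : ℕ) = (j - 1) / 2 then (-1 : ℂ) else 1)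
    · intro k
      have hk := k.isLt
      split_ifs <;>
        first
          | omega
          | (exfalso; omega)
          | exact ZX_anti
          | exact ZY_anti
          | exact YX_anti
          | simp
    · exact prod_sign (⟨(j - 1) / 2, hp⟩ : Fin ℓ)
  · -- F O F⁻¹ = -O
    have hFF : fermionParity ℓ * fermionParity ℓ = 1 := by
      unfold fermionParity
      rw [kron_mul]
      rw [show (fun _ : Fin ℓ => PauliZ * PauliZ) = fun _ : Fin ℓ =>
        (1 : Matrix (Fin 2) (Fin 2) ℂ) from funext fun _ => ZZ_one]
      exact kron_one
    have hFinv : (fermionParity ℓ)⁻¹ = fermionParity ℓ := Matrix.inv_eq_right_inv hFF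
    have hFO : fermionParity ℓ * chi ℓ (2 * ℓ) =
        -(chi ℓ (2 * ℓ) * fermionParity ℓ) := by
      rw [htop]
      unfold fermionParity
      apply kron_anticomm _ _ (fun m : Fin ℓ => if (m : ℕ) = ℓ - 1 then (-1 : ℂ) else 1)
      · intro m
        have hm := m.isLt
        split_ifs <;>
          first
            | omega
            | (exfalso; omega)
            | exact ZY_anti
            | simp
      · exact prod_sign (⟨ℓ - 1, by omega⟩ : Fin ℓ)
    rw [hFinv, hFO]
    rw [neg_mul, mul_assoc, hFF, mul_one]
  · -- O self-adjoint
    rw [htop, kron_conjTranspose]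
    refine congrArg kron (funext fun m => ?_)
    by_cases h : (m : ℕ) + 1 = ℓ <;> simp [h, Yherm, Zherm]
  · -- O not scalar
    rintro ⟨c, hc⟩
    set d : Fin ℓ → Fin 2 := fun _ => 0 with hd
    have hOdd : chi ℓ (2 * ℓ) d d = 0 := by
      rw [htop]
      show (∏ m : Fin ℓ, (if (m : ℕ) + 1 = ℓ then PauliY else PauliZ) (d m) (d m)) = 0
      apply Finset.prod_eq_zero (Finset.mem_univ (⟨ℓ - 1, by omega⟩ : Fin ℓ))
      rw [if_pos (by simp; omega)]
      simp [PauliY, d]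
    have hcd : chi ℓ (2 * ℓ) d d = c := by
      rw [hc]; simp [Matrix.smul_apply, Matrix.one_apply]
    have hc0 : c = 0 := by rw [← hcd, hOdd]
    rw [hc, hc0] at hsq
    simp only [zero_smul, mul_zero] at hsq
    have := congrFun (congrFun hsq d) d
    simp [Matrix.one_apply] at this
end
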